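/- Let n ≥ 3 be odd and let x : Fin n → ZMod 12 be a pitch-class segment satisfying Condition 1: there exists λ : Fin n → ZMod 12 with Σ_{j : Fin n} λ j · (x j − x 0) = 1 in ZMod 12. Then the orbit of x under the subgroup of Equiv.Perm (Fin n → ZMod 12) generated by the cyclically consecutive contextual inversions {p i (i+1) : i ∈ Fin n} equals the orbit of x under the T/I group, i.e. the subgroup generated by the translation T₁ (add 1 to every entry) and the inversion I (negate every entry). -/

import Mathlib

/-- Contextual inversion `p i j` on pitch-class segments of length `n`. -/
def p {n : ℕ} (i j : Fin n) (x : Fin n → ZMod 12) : Fin n → ZMod 12 :=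
  fun r => x i + x j - x r

/-- Contextual inversion `p i j` as a permutation (it is an involution). -/
def pEquiv {n : ℕ} (i j : Fin n) : Equiv.Perm (Fin n → ZMod 12) where
  toFun := p i j
  invFun := p i j
  left_inv x := by funext r; simp only [p]; ring
  right_inv x := by funext r; simp only [p]; ring

/-- The translation `T₁` (add `1` to every entry) as a permutation. -/
def T1 {n : ℕ} : Equiv.Perm (Fin n → ZMod 12) := Equiv.addRight 1

/-- The inversion `I` (negate every entry) as a permutation. -/
def Iop {n : ℕ} : Equiv.Perm (Fin n → ZMod 12) := Equiv.neg _

/-!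
Both orbits are `{±x + c}`. If `k` commutes with a group `H` and moves `x` within its `H`-orbit,
it maps that orbit into itself; such `k` form a subgroup, so it suffices to check generators.
Contextual inversions commute with translations and with `I`, and `p i j x = -x + (x i + x j)`.
Conversely `p i (i+1) (p (i+1) (i+2) x)` is `x` translated by `x (i+2) - x i`; as `n` is odd,
steps of two reach every index, so each `x j - x 0`, and by Condition 1 also `1`, is a translation
amount preserving the orbit, and `I x` is a translate of `p 0 1 x`.
-/

open MulAction Subgroup

section OrbitTransfer

variable {M α : Type*} [Group M] [MulAction M α]

theorem smul_mem_orbit_smul_of_mem_centralizer {H : Subgroup M} {k : M}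
    (hk : k ∈ centralizer H) {y z : α} (hy : y ∈ orbit H z) : k • y ∈ orbit H (k • z) := by
  obtain ⟨h, rfl⟩ := hy
  refine ⟨h, ?_⟩
  change (h : M) • k • z = k • (h : M) • z
  rw [smul_smul, smul_smul, mem_centralizer_iff.1 hk h h.2]

theorem smul_mem_orbit_of_mem_centralizer {H : Subgroup M} {k : M} (hk : k ∈ centralizer H)
    {x y : α} (hkx : k • x ∈ orbit H x) (hy : y ∈ orbit H x) : k • y ∈ orbit H x :=
  orbit_eq_iff.2 hkx ▸ smul_mem_orbit_smul_of_mem_centralizer hk hy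

def orbitPreservingCentralizer (H : Subgroup M) (x : α) : Subgroup M where
  carrier := {k | k ∈ centralizer H ∧ k • x ∈ orbit H x}
  one_mem' := ⟨one_mem _, by rw [one_smul]; exact mem_orbit_self x⟩
  mul_mem' := fun {a} _ ⟨ha, hax⟩ ⟨hb, hbx⟩ =>
    ⟨mul_mem ha hb, mul_smul a _ x ▸ smul_mem_orbit_of_mem_centralizer ha hax hbx⟩
  inv_mem' := fun {a} ⟨ha, hax⟩ => ⟨inv_mem ha, by
    have hx : x ∈ orbit H (a • x) := orbit_eq_iff.2 hax ▸ mem_orbit_self x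
    simpa only [inv_smul_smul] using smul_mem_orbit_smul_of_mem_centralizer (inv_mem ha) hx⟩

theorem orbit_closure_subset_orbit {H : Subgroup M} {S : Set M} {x : α}
    (hS : S ⊆ orbitPreservingCentralizer H x) : orbit (closure S) x ⊆ orbit H x := by
  rintro _ ⟨⟨g, hg⟩, rfl⟩
  exact ((closure_le _).2 hS hg).2

end OrbitTransfer

open Fin.NatCast in
theorem Fin.apply_eq_apply_zero_of_odd {β : Type*} {n : ℕ} [NeZero n] (hn : Odd n)
    {f : Fin n → β} (hf : ∀ i, f (i + 1 + 1) = f i) (j : Fin n) : f j = f 0 := by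
  have heven : ∀ m : ℕ, f ((2 * m : ℕ) : Fin n) = f 0 := by
    intro m
    induction m with
    | zero => simp
    | succ m ih => rw [Nat.mul_succ, Nat.cast_add_one, Nat.cast_add_one, hf, ih]
  obtain ⟨t, ht⟩ := hn
  have hdouble (a : ℕ) : 2 * (a * (t + 1)) = a * n + a := by rw [ht]; ring
  have hj : ((2 * (j.val * (t + 1)) : ℕ) : Fin n) = j := by
    ext
    rw [Fin.val_natCast, hdouble, Nat.mul_add_mod_self_right, Nat.mod_eq_of_lt j.isLt]
  rw [← hj, heven]

section ContextualInversions

variable {n : ℕ}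

def translation (c : ZMod 12) : Equiv.Perm (Fin n → ZMod 12) :=
  Equiv.addRight fun _ => c

@[simp]
theorem translation_apply (c : ZMod 12) (y : Fin n → ZMod 12) (r : Fin n) :
    translation c y r = y r + c := rfl

@[simp]
theorem Iop_apply (y : Fin n → ZMod 12) (r : Fin n) : Iop y r = -y r := rfl

@[simp]
theorem pEquiv_apply (i j : Fin n) (y : Fin n → ZMod 12) (r : Fin n) :
    pEquiv i j y r = y i + y j - y r := rfl

theorem translation_zero : translation (n := n) 0 = 1 := Equiv.addRight_zero

theorem translation_add (a b : ZMod 12) :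
    translation (n := n) (a + b) = translation b * translation a :=
  Equiv.addRight_add _ _

theorem translation_neg (a : ZMod 12) : translation (n := n) (-a) = (translation a)⁻¹ :=
  (Equiv.neg_addRight _).symm

theorem translation_eq_T1_pow (c : ZMod 12) : translation (n := n) c = T1 ^ c.val := by
  rw [T1, Equiv.nsmul_addRight, translation]
  congr
  funext r
  simp

theorem pEquiv_commute_translation (i j : Fin n) (c : ZMod 12) :
    Commute (pEquiv i j) (translation c) :=
  Equiv.ext fun y => funext fun r => by simp; ring

theorem pEquiv_commute_Iop (i j : Fin n) : Commute (pEquiv i j) Iop :=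
  Equiv.ext fun y => funext fun r => by simp; ring

theorem pEquiv_apply_eq_translation_Iop (i j : Fin n) (y : Fin n → ZMod 12) :
    pEquiv i j y = translation (y i + y j) (Iop y) :=
  funext fun r => by simp; ring

theorem pEquiv_pEquiv_apply (i j k l : Fin n) (y : Fin n → ZMod 12) :
    pEquiv i j (pEquiv k l y) = translation (y k + y l - y i - y j) y :=
  funext fun r => by simp; ring

def translationInversionGroup (n : ℕ) : Subgroup (Equiv.Perm (Fin n → ZMod 12)) :=
  closure {T1, Iop}

theorem translation_mem_translationInversionGroup (c : ZMod 12) :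
    translation c ∈ translationInversionGroup n := by
  rw [translation_eq_T1_pow]
  exact pow_mem (subset_closure (Set.mem_insert _ _)) _

theorem Iop_mem_translationInversionGroup : Iop ∈ translationInversionGroup n :=
  subset_closure (Set.mem_insert_of_mem _ rfl)

theorem pEquiv_mem_orbitPreservingCentralizer (i j : Fin n) (x : Fin n → ZMod 12) :
    pEquiv i j ∈ orbitPreservingCentralizer (translationInversionGroup n) x := by
  refine ⟨?_, ⟨⟨translation (x i + x j) * Iop, mul_mem
    (translation_mem_translationInversionGroup _) Iop_mem_translationInversionGroup⟩,
    (pEquiv_apply_eq_translation_Iop i j x).symm⟩⟩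
  rw [translationInversionGroup, centralizer_closure, mem_centralizer_iff]
  rintro _ (rfl | rfl)
  · exact (pEquiv_commute_translation i j 1).symm.eq
  · exact (pEquiv_commute_Iop i j).symm.eq

variable [NeZero n]

def consecutiveInversionGroup (n : ℕ) [NeZero n] : Subgroup (Equiv.Perm (Fin n → ZMod 12)) :=
  closure {g | ∃ i : Fin n, g = pEquiv i (i + 1)}

theorem mem_centralizer_consecutiveInversionGroup {k : Equiv.Perm (Fin n → ZMod 12)}
    (hk : ∀ i j : Fin n, Commute (pEquiv i j) k) :
    k ∈ centralizer (consecutiveInversionGroup n) := by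
  rw [consecutiveInversionGroup, centralizer_closure, mem_centralizer_iff]
  rintro _ ⟨i, rfl⟩
  exact hk _ _

def orbitShifts (x : Fin n → ZMod 12) : AddSubgroup (ZMod 12) where
  carrier := {c | translation c ∈ orbitPreservingCentralizer (consecutiveInversionGroup n) x}
  zero_mem' := by
    rw [Set.mem_ofPred_eq, translation_zero]
    exact one_mem _
  add_mem' ha hb := by
    rw [Set.mem_ofPred_eq, translation_add]
    exact mul_mem hb ha
  neg_mem' ha := by
    rw [Set.mem_ofPred_eq, translation_neg]
    exact inv_mem ha

theorem add_one_add_one_sub_mem_orbitShifts (x : Fin n → ZMod 12) (i : Fin n) :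
    x (i + 1 + 1) - x i ∈ orbitShifts x := by
  refine ⟨mem_centralizer_consecutiveInversionGroup fun _ _ => pEquiv_commute_translation _ _ _,
    ⟨⟨pEquiv i (i + 1) * pEquiv (i + 1) (i + 1 + 1),
      mul_mem (subset_closure ⟨i, rfl⟩) (subset_closure ⟨i + 1, rfl⟩)⟩, ?_⟩⟩
  change pEquiv i (i + 1) (pEquiv (i + 1) (i + 1 + 1) x) = translation _ x
  rw [pEquiv_pEquiv_apply]
  congr 2
  ring

theorem sub_apply_zero_mem_orbitShifts (hodd : Odd n) (x : Fin n → ZMod 12) (j : Fin n) :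
    x j - x 0 ∈ orbitShifts x := by
  rw [← QuotientAddGroup.eq_iff_sub_mem]
  exact Fin.apply_eq_apply_zero_of_odd hodd (f := fun i => (x i : ZMod 12 ⧸ orbitShifts x))
    (fun i => QuotientAddGroup.eq_iff_sub_mem.2 (add_one_add_one_sub_mem_orbitShifts x i)) j

theorem translation_mem_orbitPreservingCentralizer (hodd : Odd n) (x : Fin n → ZMod 12)
    (hcond : ∃ lam : Fin n → ZMod 12, ∑ j : Fin n, lam j * (x j - x 0) = 1) (c : ZMod 12) :
    translation c ∈ orbitPreservingCentralizer (consecutiveInversionGroup n) x := by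
  obtain ⟨lam, hlam⟩ := hcond
  have hone : (1 : ZMod 12) ∈ orbitShifts x := hlam ▸ AddSubgroup.sum_mem _ fun j _ =>
    ZMod.smul_mem (sub_apply_zero_mem_orbitShifts hodd x j) (lam j)
  have hc := ZMod.smul_mem hone c
  rwa [smul_eq_mul, mul_one] at hc

theorem Iop_mem_orbitPreservingCentralizer (x : Fin n → ZMod 12)
    (hx : ∀ c, translation c ∈ orbitPreservingCentralizer (consecutiveInversionGroup n) x) :
    Iop ∈ orbitPreservingCentralizer (consecutiveInversionGroup n) x := by
  have hIx : Iop x = translation (-(x 0 + x (0 + 1))) (pEquiv 0 (0 + 1) x) :=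
    funext fun r => by simp; ring
  refine ⟨mem_centralizer_consecutiveInversionGroup pEquiv_commute_Iop, ?_⟩
  change Iop x ∈ _
  rw [hIx]
  obtain ⟨hcomm, hmem⟩ := hx (-(x 0 + x (0 + 1)))
  exact smul_mem_orbit_of_mem_centralizer hcomm hmem
    (mem_orbit x (⟨_, subset_closure ⟨0, rfl⟩⟩ : consecutiveInversionGroup n))

end ContextualInversions

theorem stmt14_general (n : ℕ) [NeZero n] (hodd : Odd n)
    (x : Fin n → ZMod 12)
    (hcond : ∃ lam : Fin n → ZMod 12, ∑ j : Fin n, lam j * (x j - x 0) = 1) :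
    MulAction.orbit (Subgroup.closure
        {g : Equiv.Perm (Fin n → ZMod 12) | ∃ i : Fin n, g = pEquiv i (i + 1)}) x =
      MulAction.orbit (Subgroup.closure {T1 (n := n), Iop (n := n)}) x := by
  have hx := translation_mem_orbitPreservingCentralizer hodd x hcond
  refine (orbit_closure_subset_orbit (H := translationInversionGroup n) ?_).antisymm
    (orbit_closure_subset_orbit (H := consecutiveInversionGroup n) ?_)
  · rintro _ ⟨i, rfl⟩
    exact pEquiv_mem_orbitPreservingCentralizer i (i + 1) x
  · rintro _ (rfl | rfl)
    · exact hx 1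
    · exact Iop_mem_orbitPreservingCentralizer x hx

theorem stmt14 (n : ℕ) [NeZero n] (hn : 3 ≤ n) (hodd : Odd n)
    (x : Fin n → ZMod 12)
    (hcond : ∃ lam : Fin n → ZMod 12, ∑ j : Fin n, lam j * (x j - x 0) = 1) :
    MulAction.orbit (Subgroup.closure
        {g : Equiv.Perm (Fin n → ZMod 12) | ∃ i : Fin n, g = pEquiv i (i + 1)}) x =
      MulAction.orbit (Subgroup.closure {T1 (n := n), Iop (n := n)}) x :=
  stmt14_general n hodd x hcond
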